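/- Let V be a finite vertex type and F a finite face type, with each face f assigned an edge set E_f such that every vertex incident to an edge of E_f is incident to exactly two edges of E_f. Assume only the two-face condition (two distinct faces may share more than one edge). Then every flag (v,f) has degree 3 or 4 in the Euler-transformed graph Ĝ; moreover the degree of (v,f) equals 4 if and only if the two other faces containing the two edges of E_f incident to v are distinct. -/
import Mathlib


open scoped Classical

noncomputable section

/-- A *flag* of a combinatorial polygonal complex: a pair `(v, f)` of a vertex and a face
such that `v` is incident to some edge of the edge set `E f` of the face `f`. -/
abbrev EulerFlag {V F : Type*} (E : F → Finset (Sym2 V)) : Type _ :=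
  {p : V × F // ∃ e ∈ E p.2, p.1 ∈ e}

/-- The adjacency relation of the Euler-transformed graph on flags:
`(u, f)` and `(v, f)` are related when `{u, v} ∈ E f`, and `(v, f)` and `(v, f')` are related
when `f ≠ f'` and some edge `e ∈ E f ∩ E f'` contains `v`. -/
def eulerRel {V F : Type*} (E : F → Finset (Sym2 V)) (p q : EulerFlag E) : Prop :=
  (p.val.2 = q.val.2 ∧ p.val.1 ≠ q.val.1 ∧ s(p.val.1, q.val.1) ∈ E p.val.2) ∨
    (p.val.1 = q.val.1 ∧ p.val.2 ≠ q.val.2 ∧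
      ∃ e, e ∈ E p.val.2 ∧ e ∈ E q.val.2 ∧ p.val.1 ∈ e)

/-- The Euler-transformed graph `Ĝ` on flags. -/
def eulerGraph {V F : Type*} (E : F → Finset (Sym2 V)) : SimpleGraph (EulerFlag E) :=
  SimpleGraph.fromRel (eulerRel E)

lemma eulerRel_symm {V F : Type*} (E : F → Finset (Sym2 V)) {p q : EulerFlag E}
    (h : eulerRel E p q) : eulerRel E q p := by
  rcases h with ⟨h1, h2, h3⟩ | ⟨h1, h2, ⟨e, he1, he2, hve⟩⟩
  · left
    refine ⟨h1.symm, h2.symm, ?_⟩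
    rwa [Sym2.eq_swap, ← h1]
  · exact Or.inr ⟨h1.symm, h2.symm, e, he2, he1, h1 ▸ hve⟩

lemma euler_adj_iff {V F : Type*} (E : F → Finset (Sym2 V)) (p q : EulerFlag E) :
    (eulerGraph E).Adj p q ↔ eulerRel E p q := by
  constructor
  · rintro ⟨hne, h | h⟩
    · exact h
    · exact eulerRel_symm E h
  · intro h
    refine ⟨?_, Or.inl h⟩
    rcases h with ⟨_, h2, _⟩ | ⟨_, h2, _⟩
    · intro hpq; exact h2 (congrArg (fun r => r.val.1) hpq)
    · intro hpq; exact h2 (congrArg (fun r => r.val.2) hpq)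

lemma card_two_other {α : Type*} [DecidableEq α] {s : Finset α} {x : α}
    (h : s.card = 2) (hx : x ∈ s) : ∃ y, y ≠ x ∧ s = {x, y} := by
  obtain ⟨a, b, hab, rfl⟩ := Finset.card_eq_two.mp h
  rcases Finset.mem_insert.mp hx with rfl | hx
  · exact ⟨b, hab.symm, rfl⟩
  · rcases Finset.mem_singleton.mp hx with rfl
    exact ⟨a, hab, by rw [Finset.pair_comm]⟩

/-- With only the two-face condition, every flag has degree 3 or 4 in the Euler-transformed
graph, and the degree is 4 iff the two other faces containing the two edges of `E f`
incident to `v` are distinct. -/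
theorem euler_transform_degree_three_or_four {V F : Type*} [Fintype V] [Fintype F]
    (E : F → Finset (Sym2 V))
    (hnd : ∀ f, ∀ e ∈ E f, ¬ e.IsDiag)
    (hloc : ∀ f v, (∃ e ∈ E f, v ∈ e) → ((E f).filter (fun e => v ∈ e)).card = 2)
    (htwo : ∀ e : Sym2 V, (∃ f, e ∈ E f) →
      (Finset.univ.filter (fun f => e ∈ E f)).card = 2) :
    ∀ p : EulerFlag E,
      ((eulerGraph E).degree p = 3 ∨ (eulerGraph E).degree p = 4) ∧
      ((eulerGraph E).degree p = 4 ↔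
        ∀ e₁ e₂ : Sym2 V, e₁ ∈ E p.val.2 → e₂ ∈ E p.val.2 →
          p.val.1 ∈ e₁ → p.val.1 ∈ e₂ → e₁ ≠ e₂ →
          ∀ f₁ f₂ : F, f₁ ≠ p.val.2 → f₂ ≠ p.val.2 →
            e₁ ∈ E f₁ → e₂ ∈ E f₂ → f₁ ≠ f₂) := by
  rintro ⟨⟨v, f⟩, hp⟩
  -- the two edges of `E f` through `v`
  obtain ⟨e₁, e₂, he₁₂, hfil⟩ := Finset.card_eq_two.mp (hloc f v hp)
  have hedge : ∀ e, (e ∈ E f ∧ v ∈ e) ↔ (e = e₁ ∨ e = e₂) := by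
    intro e
    simpa [Finset.mem_filter] using Finset.ext_iff.mp hfil e
  have he₁f : e₁ ∈ E f := ((hedge e₁).mpr (Or.inl rfl)).1
  have hv₁ : v ∈ e₁ := ((hedge e₁).mpr (Or.inl rfl)).2
  have he₂f : e₂ ∈ E f := ((hedge e₂).mpr (Or.inr rfl)).1
  have hv₂ : v ∈ e₂ := ((hedge e₂).mpr (Or.inr rfl)).2
  -- other endpoints
  set u₁ := Sym2.Mem.other hv₁ with hu₁def
  set u₂ := Sym2.Mem.other hv₂ with hu₂def
  have hs₁ : s(v, u₁) = e₁ := Sym2.other_spec hv₁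
  have hs₂ : s(v, u₂) = e₂ := Sym2.other_spec hv₂
  have hu₁v : u₁ ≠ v := Sym2.other_ne (hnd f e₁ he₁f) hv₁
  have hu₂v : u₂ ≠ v := Sym2.other_ne (hnd f e₂ he₂f) hv₂
  have hu₁₂ : u₁ ≠ u₂ := by
    intro h
    exact he₁₂ (by rw [← hs₁, ← hs₂, h])
  -- the other faces
  obtain ⟨f₁, hf₁f, hfac₁⟩ := card_two_other (htwo e₁ ⟨f, he₁f⟩)
    (Finset.mem_filter.mpr ⟨Finset.mem_univ f, he₁f⟩)
  obtain ⟨f₂, hf₂f, hfac₂⟩ := card_two_other (htwo e₂ ⟨f, he₂f⟩)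
    (Finset.mem_filter.mpr ⟨Finset.mem_univ f, he₂f⟩)
  have hface₁ : ∀ g, e₁ ∈ E g ↔ (g = f ∨ g = f₁) := by
    intro g
    rw [show (e₁ ∈ E g) ↔ g ∈ Finset.univ.filter (fun f => e₁ ∈ E f) by
      simp [Finset.mem_filter], hfac₁, Finset.mem_insert, Finset.mem_singleton]
  have hface₂ : ∀ g, e₂ ∈ E g ↔ (g = f ∨ g = f₂) := by
    intro g
    rw [show (e₂ ∈ E g) ↔ g ∈ Finset.univ.filter (fun f => e₂ ∈ E f) by
      simp [Finset.mem_filter], hfac₂, Finset.mem_insert, Finset.mem_singleton]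
  have he₁f₁ : e₁ ∈ E f₁ := (hface₁ f₁).mpr (Or.inr rfl)
  have he₂f₂ : e₂ ∈ E f₂ := (hface₂ f₂).mpr (Or.inr rfl)
  -- the four candidate neighbors
  set p : EulerFlag E := ⟨(v, f), hp⟩ with hpdef
  set q₁ : EulerFlag E := ⟨(u₁, f), ⟨e₁, he₁f, by rw [← hs₁]; exact Sym2.mem_mk_right v u₁⟩⟩
    with hq₁def
  set q₂ : EulerFlag E := ⟨(u₂, f), ⟨e₂, he₂f, by rw [← hs₂]; exact Sym2.mem_mk_right v u₂⟩⟩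
    with hq₂def
  set r₁ : EulerFlag E := ⟨(v, f₁), ⟨e₁, he₁f₁, hv₁⟩⟩ with hr₁def
  set r₂ : EulerFlag E := ⟨(v, f₂), ⟨e₂, he₂f₂, hv₂⟩⟩ with hr₂def
  have hN : (eulerGraph E).neighborFinset p = {q₁, q₂, r₁, r₂} := by
    ext q
    rw [SimpleGraph.mem_neighborFinset, euler_adj_iff]
    constructor
    · rintro (⟨h1, h2, h3⟩ | ⟨h1, h2, ⟨e, heEf, heEq, hve⟩⟩)
      · -- same face
        have : s(v, q.val.1) = e₁ ∨ s(v, q.val.1) = e₂ :=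
          (hedge _).mp ⟨h3, Sym2.mem_mk_left _ _⟩
        rcases this with h | h
        · have : q.val.1 = u₁ := Sym2.congr_right.mp (by rw [h, ← hs₁])
          have hq : q = q₁ := Subtype.ext (Prod.ext this h1.symm)
          simp [hq]
        · have : q.val.1 = u₂ := Sym2.congr_right.mp (by rw [h, ← hs₂])
          have hq : q = q₂ := Subtype.ext (Prod.ext this h1.symm)
          simp [hq]
      · -- same vertex
        rcases (hedge e).mp ⟨heEf, hve⟩ with rfl | rfl
        · have : q.val.2 = f₁ := by
            rcases (hface₁ _).mp heEq with h | h
            · exact absurd h.symm h2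
            · exact h
          have hq : q = r₁ := Subtype.ext (Prod.ext h1.symm this)
          simp [hq]
        · have : q.val.2 = f₂ := by
            rcases (hface₂ _).mp heEq with h | h
            · exact absurd h.symm h2
            · exact h
          have hq : q = r₂ := Subtype.ext (Prod.ext h1.symm this)
          simp [hq]
    · intro hq
      simp only [Finset.mem_insert, Finset.mem_singleton] at hq
      rcases hq with rfl | rfl | rfl | rfl
      · exact Or.inl ⟨rfl, fun h => hu₁v h.symm, by rw [hs₁]; exact he₁f⟩
      · exact Or.inl ⟨rfl, fun h => hu₂v h.symm, by rw [hs₂]; exact he₂f⟩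
      · exact Or.inr ⟨rfl, fun h => hf₁f h.symm, e₁, he₁f, he₁f₁, hv₁⟩
      · exact Or.inr ⟨rfl, fun h => hf₂f h.symm, e₂, he₂f, he₂f₂, hv₂⟩
  have hq₁q₂ : q₁ ≠ q₂ := fun h => hu₁₂ (congrArg (fun r => r.val.1) h)
  have hq₁r₁ : q₁ ≠ r₁ := fun h => hu₁v (congrArg (fun r => r.val.1) h)
  have hq₁r₂ : q₁ ≠ r₂ := fun h => hu₁v (congrArg (fun r => r.val.1) h)
  have hq₂r₁ : q₂ ≠ r₁ := fun h => hu₂v (congrArg (fun r => r.val.1) h)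
  have hq₂r₂ : q₂ ≠ r₂ := fun h => hu₂v (congrArg (fun r => r.val.1) h)
  have hdeg : (eulerGraph E).degree p = if f₁ = f₂ then 3 else 4 := by
    rw [SimpleGraph.degree, hN]
    by_cases h : f₁ = f₂
    · subst h
      have hr : r₂ = r₁ := Subtype.ext rfl
      rw [if_pos rfl, hr,
        show ({q₁, q₂, r₁, r₁} : Finset (EulerFlag E)) = {q₁, q₂, r₁} by simp,
        Finset.card_insert_of_notMem (by simp [hq₁q₂, hq₁r₁]),
        Finset.card_insert_of_notMem (by simp [hq₂r₁]), Finset.card_singleton]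
    · have hr₁r₂ : r₁ ≠ r₂ := fun hh => h (congrArg (fun r => r.val.2) hh)
      simp only [if_neg h]
      rw [Finset.card_insert_of_notMem (by simp [hq₁q₂, hq₁r₁, hq₁r₂]),
        Finset.card_insert_of_notMem (by simp [hq₂r₁, hq₂r₂]),
        Finset.card_insert_of_notMem (by simp [hr₁r₂]), Finset.card_singleton]
  constructor
  · by_cases h : f₁ = f₂
    · left; rw [hdeg, if_pos h]
    · right; rw [hdeg, if_neg h]
  · rw [hdeg]
    constructor
    · intro h4
      have hne : f₁ ≠ f₂ := by
        intro h; rw [if_pos h] at h4; exact absurd h4 (by norm_num)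
      intro e₁' e₂' he₁'f he₂'f hv₁' hv₂' hne' g₁ g₂ hg₁ hg₂ hg₁e hg₂e
      rcases (hedge e₁').mp ⟨he₁'f, hv₁'⟩ with rfl | rfl <;>
        rcases (hedge e₂').mp ⟨he₂'f, hv₂'⟩ with rfl | rfl
      · exact absurd rfl hne'
      · have h1 : g₁ = f₁ := ((hface₁ g₁).mp hg₁e).resolve_left hg₁
        have h2 : g₂ = f₂ := ((hface₂ g₂).mp hg₂e).resolve_left hg₂
        rw [h1, h2]; exact hne
      · have h1 : g₁ = f₂ := ((hface₂ g₁).mp hg₁e).resolve_left hg₁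
        have h2 : g₂ = f₁ := ((hface₁ g₂).mp hg₂e).resolve_left hg₂
        rw [h1, h2]; exact hne.symm
      · exact absurd rfl hne'
    · intro hP
      have : f₁ ≠ f₂ :=
        hP e₁ e₂ he₁f he₂f hv₁ hv₂ he₁₂ f₁ f₂ hf₁f hf₂f he₁f₁ he₂f₂
      rw [if_neg this]
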